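/- Let E = EuclideanSpace ℝ (Fin d) with d ≥ 1, let b ∈ E, and define the world function Σ(x,x') = ⟨b, x − x'⟩ + ½‖x − x'‖². Then for every y ∈ E with y ≠ 0, the neutral first order tube through 0 and y, T_{0y} = { x ∈ E : |0y|²·|0x|² − (0y.0x)(0x.0y) = 0 }, equals the straight line { τ•y : τ ∈ ℝ }. In particular the shape of the first order tube is insensitive to the constant anisotropy vector b: it is the same as in the symmetric case b = 0. -/

import Mathlib

/-- The scalar Σ-product `(P₀P₁.Q₀Q₁) = Σ(P₀,Q₁) − Σ(P₁,Q₁) − Σ(P₀,Q₀) + Σ(P₁,Q₀)`. -/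
def ssp {Ω : Type} (W : Ω → Ω → ℝ) (P0 P1 Q0 Q1 : Ω) : ℝ :=
  W P0 Q1 - W P1 Q1 - W P0 Q0 + W P1 Q0

/-- The world function `Σ(x,x') = ⟨b, x − x'⟩ + ½‖x − x'‖²` of a proper Euclidean space
with a constant anisotropy vector `b`. -/
noncomputable def Wlin (d : ℕ) (b : EuclideanSpace ℝ (Fin d)) :
    EuclideanSpace ℝ (Fin d) → EuclideanSpace ℝ (Fin d) → ℝ :=
  fun x x' => (inner ℝ b (x - x') : ℝ) + (1 / 2) * ‖x - x'‖ ^ 2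

lemma ssp_Wlin (d : ℕ) (b u v : EuclideanSpace ℝ (Fin d)) :
    ssp (Wlin d b) 0 u 0 v = inner ℝ u v := by
  simp only [ssp, Wlin, inner_sub_right, sub_zero, zero_sub, sub_self, inner_zero_right,
    norm_zero, norm_neg]
  have h : ‖u - v‖ ^ 2 = ‖u‖ ^ 2 - 2 * inner ℝ u v + ‖v‖ ^ 2 :=
    norm_sub_sq_real u v
  rw [h, inner_neg_right]
  ring

/-- For the world function with a constant antisymmetric part, the neutral first order
tube through `0` and `y ≠ 0` is the straight line `{τ•y : τ ∈ ℝ}`: the tube shape is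
insensitive to the constant anisotropy vector `b`, being the same as for `b = 0`. -/
theorem neutral_tube_of_constant_anisotropy_is_line
    (d : ℕ) (hd : 1 ≤ d) (b y : EuclideanSpace ℝ (Fin d)) (hy : y ≠ 0) :
    {x : EuclideanSpace ℝ (Fin d) |
        ssp (Wlin d b) 0 y 0 y * ssp (Wlin d b) 0 x 0 x
          - ssp (Wlin d b) 0 y 0 x * ssp (Wlin d b) 0 x 0 y = 0} =
      {x : EuclideanSpace ℝ (Fin d) | ∃ τ : ℝ, x = τ • y} := by
  ext x
  simp only [Set.mem_setOf_eq, ssp_Wlin]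
  constructor
  · intro h
    rcases eq_or_ne x 0 with rfl | hx
    · exact ⟨0, by simp⟩
    · have h' : ‖(inner ℝ y x : ℝ)‖ = ‖y‖ * ‖x‖ := by
        have hyy : (inner ℝ y y : ℝ) = ‖y‖ * ‖y‖ := real_inner_self_eq_norm_mul_norm y
        have hxx : (inner ℝ x x : ℝ) = ‖x‖ * ‖x‖ := real_inner_self_eq_norm_mul_norm x
        have hc : (inner ℝ x y : ℝ) = inner ℝ y x := (real_inner_comm x y).symm
        rw [hyy, hxx, hc] at h
        have h2 : (inner ℝ y x : ℝ) ^ 2 = (‖y‖ * ‖x‖) ^ 2 := by nlinarith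
        have := sq_abs (inner ℝ y x : ℝ)
        rw [Real.norm_eq_abs]
        nlinarith [abs_nonneg (inner ℝ y x : ℝ), norm_nonneg y, norm_nonneg x,
          mul_nonneg (norm_nonneg y) (norm_nonneg x)]
      rcases (norm_inner_eq_norm_iff hy hx).mp h' with ⟨r, _, hr⟩
      exact ⟨r, hr⟩
  · rintro ⟨τ, rfl⟩
    simp only [real_inner_smul_left, real_inner_smul_right]
    ring
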